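/- arXiv:1607.07598 — 11 statements merged into one kernel-verified Lean document; each statement's English description precedes it below -/
import Mathlib

section
/- Let f : 2^S → ℝ be submodular and g : 2^S → ℝ be supermodular on a finite set S. If A and B are subsets both achieving the maximum value ρ* of the density ρ(X) = g(X)/f(X) over nonempty subsets (with f positive on nonempty sets), then A ∪ B and A ∩ B (if nonempty) also achieve maximum density. Consequently, the family of maximum-density subsets (together with ∅) forms a lattice. -/
open Finset

def Submodular {n : ℕ} (f : Finset (Fin n) → ℝ) : Prop :=
  ∀ A B : Finset (Fin n), f (A ∪ B) + f (A ∩ B) ≤ f A + f B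

def Supermodular {n : ℕ} (g : Finset (Fin n) → ℝ) : Prop :=
  ∀ A B : Finset (Fin n), g A + g B ≤ g (A ∪ B) + g (A ∩ B)

def MonotoneSet {n : ℕ} (f : Finset (Fin n) → ℝ) : Prop :=
  ∀ A B : Finset (Fin n), A ⊆ B → f A ≤ f B

/-- The set of elements searched up to and including `j` under search `σ`
(where `σ k` is the element searched at position `k`). -/
def searchSegment {n : ℕ} (σ : Equiv.Perm (Fin n)) (j : Fin n) : Finset (Fin n) :=
  Finset.univ.filter (fun i => σ.symm i ≤ σ.symm j)

/-- Expected search searchCost. -/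
def searchCost {n : ℕ} (f g : Finset (Fin n) → ℝ) (σ : Equiv.Perm (Fin n)) : ℝ :=
  ∑ j, (g (searchSegment σ j) - g (searchSegment σ j \ {j})) * f (searchSegment σ j)

def dual {n : ℕ} (g : Finset (Fin n) → ℝ) (A : Finset (Fin n)) : ℝ :=
  g Finset.univ - g Aᶜ

def reversePerm {n : ℕ} (σ : Equiv.Perm (Fin n)) : Equiv.Perm (Fin n) :=
  (Fin.revPerm).trans σ

def InitialSegment {n : ℕ} (σ : Equiv.Perm (Fin n)) (A : Finset (Fin n)) : Prop :=
  ∀ i j : Fin n, j ∈ A → σ.symm i ≤ σ.symm j → i ∈ A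


/-!
If `ρ = ρ*` then `g ≤ ρ f` everywhere, with equality exactly on the maximum-density sets.
For two such sets `A`, `B`, submodularity of `f`, `ρ ≥ 0` and supermodularity of `g` give
`ρ (f(A ∪ B) + f(A ∩ B)) ≤ ρ (f A + f B) = g A + g B ≤ g(A ∪ B) + g(A ∩ B)`, while `g ≤ ρ f`
bounds the right end by the left one. So all inequalities are equalities, and since each
summand satisfies `g ≤ ρ f`, both `A ∪ B` and `A ∩ B` attain `g = ρ f`.
-/

theorem sup_inf_eq_mul_of_le_mul {α : Type*} [Lattice α] {f g : α → ℝ} {ρ : ℝ} (hρ : 0 ≤ ρ)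
    (hle : ∀ x, g x ≤ ρ * f x) {a b : α} (hsub : f (a ⊔ b) + f (a ⊓ b) ≤ f a + f b)
    (hsuper : g a + g b ≤ g (a ⊔ b) + g (a ⊓ b)) (ha : g a = ρ * f a) (hb : g b = ρ * f b) :
    g (a ⊔ b) = ρ * f (a ⊔ b) ∧ g (a ⊓ b) = ρ * f (a ⊓ b) := by
  have hscaled := mul_le_mul_of_nonneg_left hsub hρ
  have hsup_le := hle (a ⊔ b)
  have hinf_le := hle (a ⊓ b)
  constructor <;> linarith

def IsMaxDensity {α : Type*} (f g : Finset α → ℝ) (A : Finset α) : Prop :=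
  ∀ C : Finset α, C.Nonempty → g C / f C ≤ g A / f A

section Density

variable {α : Type*} {f g : Finset α → ℝ} {A X : Finset α}

theorem IsMaxDensity.le_mul (hf0 : f ∅ = 0) (hg0 : g ∅ = 0)
    (hfpos : ∀ C : Finset α, C.Nonempty → 0 < f C) (hA : IsMaxDensity f g A) (C : Finset α) :
    g C ≤ g A / f A * f C := by
  rcases C.eq_empty_or_nonempty with rfl | hC
  · simp [hf0, hg0]
  · exact (div_le_iff₀ (hfpos C hC)).1 (hA C hC)

theorem IsMaxDensity.of_eq_mul (hA : IsMaxDensity f g A) (hfX : 0 < f X)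
    (hgX : g X = g A / f A * f X) : IsMaxDensity f g X := by
  intro C hC
  rw [(div_eq_iff hfX.ne').2 hgX]
  exact hA C hC

end Density

theorem maxDensity_lattice_general {n : ℕ} (f g : Finset (Fin n) → ℝ)
    (hf : Submodular f) (hf0 : f ∅ = 0)
    (hfpos : ∀ A : Finset (Fin n), A.Nonempty → 0 < f A)
    (hg : Supermodular g) (hg0 : g ∅ = 0)
    (hgnonneg : ∀ A : Finset (Fin n), 0 ≤ g A)
    (A B : Finset (Fin n)) (hA : A.Nonempty) (hB : B.Nonempty)
    (hAmax : ∀ C : Finset (Fin n), C.Nonempty → g C / f C ≤ g A / f A)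
    (hBmax : ∀ C : Finset (Fin n), C.Nonempty → g C / f C ≤ g B / f B) :
    (∀ C : Finset (Fin n), C.Nonempty → g C / f C ≤ g (A ∪ B) / f (A ∪ B)) ∧
    ((A ∩ B).Nonempty →
      ∀ C : Finset (Fin n), C.Nonempty → g C / f C ≤ g (A ∩ B) / f (A ∩ B)) := by
  set ρ := g A / f A
  have hρ : 0 ≤ ρ := div_nonneg (hgnonneg A) (hfpos A hA).le
  have hgA : g A = ρ * f A := (div_eq_iff (hfpos A hA).ne').1 rfl
  have hgB : g B = ρ * f B :=
    (div_eq_iff (hfpos B hB).ne').1 (le_antisymm (hAmax B hB) (hBmax A hA))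
  obtain ⟨hunion, hinter⟩ :=
    sup_inf_eq_mul_of_le_mul hρ (IsMaxDensity.le_mul hf0 hg0 hfpos hAmax) (hf A B) (hg A B) hgA hgB
  exact ⟨IsMaxDensity.of_eq_mul hAmax (hfpos _ (hA.mono subset_union_left)) hunion,
    fun hI => IsMaxDensity.of_eq_mul hAmax (hfpos _ hI) hinter⟩

/-- Lemma 1 (union/intersection of maximum density sets have maximum density). -/
theorem maxDensity_lattice {n : ℕ} (f g : Finset (Fin n) → ℝ)
    (hf : Submodular f) (hfmono : MonotoneSet f) (hf0 : f ∅ = 0)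
    (hfpos : ∀ A : Finset (Fin n), A.Nonempty → 0 < f A)
    (hg : Supermodular g) (hgmono : MonotoneSet g) (hg0 : g ∅ = 0)
    (hgnonneg : ∀ A : Finset (Fin n), 0 ≤ g A)
    (A B : Finset (Fin n)) (hA : A.Nonempty) (hB : B.Nonempty)
    (hAmax : ∀ C : Finset (Fin n), C.Nonempty → g C / f C ≤ g A / f A)
    (hBmax : ∀ C : Finset (Fin n), C.Nonempty → g C / f C ≤ g B / f B) :
    (∀ C : Finset (Fin n), C.Nonempty → g C / f C ≤ g (A ∪ B) / f (A ∪ B)) ∧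
    ((A ∩ B).Nonempty →
      ∀ C : Finset (Fin n), C.Nonempty → g C / f C ≤ g (A ∩ B) / f (A ∩ B)) :=
  maxDensity_lattice_general f g hf hf0 hfpos hg hg0 hgnonneg A B hA hB hAmax hBmax
end

section
/- Let f : 2^S → ℝ be non-decreasing and g : 2^S → ℝ be supermodular on a finite set S of size n. For any two permutations π and π' of S, one has ∑_{j=1}^n (g(S_j^{π'}) − g(S_j^{π'} − j)) · f(S_j^π) ≤ ∑_{j=1}^n (g(S_j^π) − g(S_j^π − j)) · f(S_j^π), where S_j^σ denotes the set consisting of j together with all elements preceding j in the ordering σ. -/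
/-!
Order the ground set by `π` and let `P m` be its first `m` elements. Summation by parts along
this chain turns `∑ j, w j * f (S_j^π)` into
`(∑ j, w j) * f univ - ∑ m, (f (P (m+1)) - f (P m)) * ∑ j ∈ P m, w j`.
For the marginal gains `w j = g (S_j^σ) - g (S_j^σ - j)` of any order `σ` the total is the
telescoping sum `g univ - g ∅`, while supermodularity (gains only grow on larger sets) gives
`∑ j ∈ P m, w j ≥ g (P m) - g ∅`, with equality for `σ = π`. As `f` is monotone, the
increments `f (P (m+1)) - f (P m)` are nonnegative, so `σ = π` maximises the sum.
-/

open Finset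

section Search

variable {n : ℕ}

theorem Supermodular.marginal_mono {g : Finset (Fin n) → ℝ} (hg : Supermodular g)
    {B C : Finset (Fin n)} {j : Fin n} (hBC : B ⊆ C) (hj : j ∉ C) :
    g (insert j B) - g B ≤ g (insert j C) - g C := by
  have h := hg (insert j B) C
  rw [insert_union, union_eq_right.mpr hBC, insert_inter_of_notMem hj,
    inter_eq_left.mpr hBC] at h
  linarith

def searchPrefix (σ : Equiv.Perm (Fin n)) (k : ℕ) : Finset (Fin n) :=
  univ.filter fun i => (σ.symm i : ℕ) < k

def marginalGain (g : Finset (Fin n) → ℝ) (σ : Equiv.Perm (Fin n)) (j : Fin n) : ℝ :=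
  g (searchSegment σ j) - g (searchSegment σ j \ {j})

@[simp]
theorem mem_searchPrefix {σ : Equiv.Perm (Fin n)} {k : ℕ} {i : Fin n} :
    i ∈ searchPrefix σ k ↔ (σ.symm i : ℕ) < k := by
  simp [searchPrefix]

theorem searchPrefix_zero (σ : Equiv.Perm (Fin n)) : searchPrefix σ 0 = ∅ := by
  ext; simp

theorem searchPrefix_of_le (σ : Equiv.Perm (Fin n)) {k : ℕ} (hk : n ≤ k) :
    searchPrefix σ k = univ := by
  ext i; simpa using (σ.symm i).isLt.trans_le hk

theorem searchPrefix_mono (σ : Equiv.Perm (Fin n)) : Monotone (searchPrefix σ) := by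
  intro k l hkl i hi
  rw [mem_searchPrefix] at hi ⊢
  omega

theorem searchPrefix_succ (σ : Equiv.Perm (Fin n)) {k : ℕ} (hk : k < n) :
    searchPrefix σ (k + 1) = insert (σ ⟨k, hk⟩) (searchPrefix σ k) := by
  ext i
  simp only [mem_insert, mem_searchPrefix, ← Equiv.symm_apply_eq, Fin.ext_iff]
  omega

theorem searchSegment_eq_searchPrefix (σ : Equiv.Perm (Fin n)) (j : Fin n) :
    searchSegment σ j = searchPrefix σ ((σ.symm j : ℕ) + 1) := by
  ext i
  simp only [searchSegment, mem_filter, mem_univ, true_and, mem_searchPrefix, Fin.le_def,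
    Nat.lt_succ_iff]

theorem sum_marginalGain_searchPrefix (g : Finset (Fin n) → ℝ) (σ : Equiv.Perm (Fin n))
    {k : ℕ} (hk : k ≤ n) :
    ∑ j ∈ searchPrefix σ k, marginalGain g σ j = g (searchPrefix σ k) - g ∅ := by
  induction k with
  | zero => simp [searchPrefix_zero]
  | succ k ih =>
    have hkn : k < n := hk
    have hnew : σ ⟨k, hkn⟩ ∉ searchPrefix σ k := by simp
    have hseg : searchSegment σ (σ ⟨k, hkn⟩) = searchPrefix σ (k + 1) := by
      simp [searchSegment_eq_searchPrefix]
    rw [searchPrefix_succ σ hkn, sum_insert hnew, ih hkn.le, marginalGain, hseg,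
      searchPrefix_succ σ hkn, sdiff_singleton_eq_erase, erase_insert hnew]
    ring

theorem sum_marginalGain (g : Finset (Fin n) → ℝ) (σ : Equiv.Perm (Fin n)) :
    ∑ j, marginalGain g σ j = g univ - g ∅ := by
  simpa [searchPrefix_of_le σ le_rfl] using sum_marginalGain_searchPrefix g σ le_rfl

theorem Supermodular.sub_le_sum_marginalGain {g : Finset (Fin n) → ℝ} (hg : Supermodular g)
    (σ : Equiv.Perm (Fin n)) (A : Finset (Fin n)) :
    g A - g ∅ ≤ ∑ j ∈ A, marginalGain g σ j := by
  induction A using Finset.induction_on_max_value σ.symm with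
  | empty => simp
  | insert a s has hmax ih =>
    have hsub : s ⊆ (searchSegment σ a).erase a := fun x hx =>
      mem_erase.mpr ⟨ne_of_mem_of_not_mem hx has, by simpa [searchSegment] using hmax x hx⟩
    have hstep := hg.marginal_mono hsub (notMem_erase a _)
    rw [insert_erase (by simp [searchSegment])] at hstep
    rw [sum_insert has, marginalGain, sdiff_singleton_eq_erase]
    linarith

theorem apply_searchSegment_eq_sub_sum (f : Finset (Fin n) → ℝ) (π : Equiv.Perm (Fin n))
    (j : Fin n) :
    f (searchSegment π j) = f univ - ∑ m ∈ (range n).filter (fun m => j ∈ searchPrefix π m),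
      (f (searchPrefix π (m + 1)) - f (searchPrefix π m)) := by
  have hfilter :
      (range n).filter (fun m => j ∈ searchPrefix π m) = Ico ((π.symm j : ℕ) + 1) n := by
    ext m
    simp only [mem_filter, mem_range, mem_searchPrefix, mem_Ico]
    omega
  rw [hfilter, sum_Ico_sub (fun m => f (searchPrefix π m)) (π.symm j).isLt,
    searchPrefix_of_le π le_rfl, searchSegment_eq_searchPrefix]
  ring

theorem sum_mul_apply_searchSegment (f : Finset (Fin n) → ℝ) (w : Fin n → ℝ)
    (π : Equiv.Perm (Fin n)) :
    ∑ j, w j * f (searchSegment π j) = (∑ j, w j) * f univ -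
      ∑ m ∈ range n, (f (searchPrefix π (m + 1)) - f (searchPrefix π m)) *
        ∑ j ∈ searchPrefix π m, w j := by
  have hswap : ∑ j, ∑ m ∈ (range n).filter (fun m => j ∈ searchPrefix π m),
        (f (searchPrefix π (m + 1)) - f (searchPrefix π m)) * w j =
      ∑ m ∈ range n, ∑ j ∈ searchPrefix π m,
        (f (searchPrefix π (m + 1)) - f (searchPrefix π m)) * w j :=
    sum_comm' fun j m => by simp only [mem_univ, mem_filter, true_and, and_comm]
  calc ∑ j, w j * f (searchSegment π j)
      = ∑ j, (w j * f univ - ∑ m ∈ (range n).filter (fun m => j ∈ searchPrefix π m),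
          (f (searchPrefix π (m + 1)) - f (searchPrefix π m)) * w j) := by
        refine sum_congr rfl fun j _ => ?_
        rw [apply_searchSegment_eq_sub_sum f π, mul_sub, mul_sum]
        simp only [mul_comm]
    _ = _ := by simp only [sum_sub_distrib, hswap, sum_mul, mul_sum]

end Search

/-- Lemma (pairwise interchange): mixing the weight increments from another
permutation can only decrease the total. -/
theorem perm_interchange {n : ℕ} (f g : Finset (Fin n) → ℝ)
    (hfmono : MonotoneSet f) (hg : Supermodular g)
    (π π' : Equiv.Perm (Fin n)) :
    (∑ j, (g (searchSegment π' j) - g (searchSegment π' j \ {j})) * f (searchSegment π j)) ≤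
      searchCost f g π := by
  change ∑ j, marginalGain g π' j * f (searchSegment π j) ≤
    ∑ j, marginalGain g π j * f (searchSegment π j)
  rw [sum_mul_apply_searchSegment, sum_mul_apply_searchSegment, sum_marginalGain,
    sum_marginalGain]
  refine sub_le_sub_left (sum_le_sum fun m hm => mul_le_mul_of_nonneg_left ?_ ?_) _
  · rw [sum_marginalGain_searchPrefix g π (mem_range.mp hm).le]
    exact hg.sub_le_sum_marginalGain π' _
  · exact sub_nonneg.mpr (hfmono _ _ (searchPrefix_mono π m.le_succ))
end

section
/- Consider the submodular search problem with non-decreasing submodular cost f and non-decreasing supermodular weight g on a finite set S, where the cost of a search (permutation) π is c(π) = ∑_j (g(S_j^π) − g(S_j^π − j)) f(S_j^π). If A ⊆ S is a nonempty subset of maximum density ρ(A) = g(A)/f(A), then there exists an optimal search π' that searches all elements of A before any element of its complement. -/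
open Finset

def InitialSegmentOf {n : ℕ} (σ : Equiv.Perm (Fin n)) (A : Finset (Fin n)) : Prop :=
  ∀ i j : Fin n, j ∈ A → σ.symm i ≤ σ.symm j → i ∈ A

/-!
By Abel summation the cost of a search is `g(S) f(S)` minus the area `∑ g(P) (f(P ∪ {x}) - f(P))`
under the staircase traced by its prefixes `P`, so it suffices to show that listing `A` first,
keeping the order inside `A` and inside `Aᶜ`, does not decrease this area.

Scan a search from the left, with `s ⊆ A` and `U ⊆ Aᶜ` already searched. Postponing the next
element `x ∉ A` past the rest of `A` changes the area by a sum of cell terms, each bounded through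
sub- and supermodularity. Since `A` has maximum density `ρ`, the rest of `A` has density at least
`ρ` on top of `s ∪ U`, while `U` has density at most `ρ` on top of `A`. The induction invariant is
that front-loading the rest of the search loses at most the credit
`(f(A ∪ U) - f(s ∪ U)) (ρ f(A ∪ U) - g(A ∪ U)) ≥ 0`, which vanishes at the start of the scan.
-/

section SetFunction

variable {n : ℕ} {f g : Finset (Fin n) → ℝ} {S T X : Finset (Fin n)}

lemma Submodular.union_sub_le_union_sub (hf : Submodular f) (hST : S ⊆ T) (hX : X ∩ T ⊆ S) :
    f (X ∪ T) - f T ≤ f (X ∪ S) - f S := by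
  have h := hf (X ∪ S) T
  rw [union_assoc, union_eq_right.2 hST, union_inter_distrib_right, inter_eq_left.2 hST,
    union_eq_right.2 hX] at h
  linarith

lemma Supermodular.union_sub_le_union_sub (hg : Supermodular g) (hST : S ⊆ T)
    (hX : X ∩ T ⊆ S) : g (X ∪ S) - g S ≤ g (X ∪ T) - g T := by
  have h := hg (X ∪ S) T
  rw [union_assoc, union_eq_right.2 hST, union_inter_distrib_right, inter_eq_left.2 hST,
    union_eq_right.2 hX] at h
  linarith

end SetFunction

section StairArea

variable {α : Type*} [DecidableEq α] (f g : Finset α → ℝ)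

def stairArea : Finset α → List α → ℝ
  | _, [] => 0
  | D, x :: l => g D * (f (insert x D) - f D) + stairArea (insert x D) l

lemma stairArea_append (D : Finset α) (l₁ l₂ : List α) :
    stairArea f g D (l₁ ++ l₂) = stairArea f g D l₁ + stairArea f g (D ∪ l₁.toFinset) l₂ := by
  induction l₁ generalizing D with
  | nil => simp [stairArea]
  | cons x l ih => simp [stairArea, ih, add_assoc, insert_union, union_insert]

lemma sum_range_take_eq_sub_stairArea (D : Finset α) (l : List α) :
    ∑ k ∈ range l.length, (g (D ∪ (l.take (k + 1)).toFinset) - g (D ∪ (l.take k).toFinset)) *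
        f (D ∪ (l.take (k + 1)).toFinset) =
      g (D ∪ l.toFinset) * f (D ∪ l.toFinset) - g D * f D - stairArea f g D l := by
  induction l generalizing D with
  | nil => simp [stairArea]
  | cons x l ih =>
    rw [List.length_cons, sum_range_succ']
    simp only [List.take_succ_cons, List.take_zero, List.toFinset_cons, List.toFinset_nil,
      union_insert, union_empty, ← insert_union, ih, stairArea]
    ring

lemma union_toFinset_filter_mem_eq {s A : Finset α} {l : List α} (hs : s ⊆ A)
    (hl : A ⊆ s ∪ l.toFinset) : s ∪ (l.filter (· ∈ A)).toFinset = A :=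
  (union_subset hs fun y hy => by simp_all).antisymm fun y hy => by simpa [hy] using hl hy

end StairArea

section Exchange

variable {n : ℕ} {f g : Finset (Fin n) → ℝ} {A : Finset (Fin n)} {ρ : ℝ}

lemma stairArea_cons_add_le (hf : Submodular f) (hfmono : MonotoneSet f) (hg : Supermodular g)
    (hgmono : MonotoneSet g) {x : Fin n} (D : Finset (Fin n)) (L : List (Fin n)) (hx : x ∉ L) :
    stairArea f g D (x :: L) +
        (g (D ∪ L.toFinset) - g D) * (f (insert x (D ∪ L.toFinset)) - f (D ∪ L.toFinset)) ≤
      stairArea f g D (L ++ [x]) +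
        (g (insert x (D ∪ L.toFinset)) - g (D ∪ L.toFinset)) *
          (f (insert x (D ∪ L.toFinset)) - f (insert x D)) := by
  induction L generalizing D with
  | nil => simp [stairArea]
  | cons y L ih =>
    set T := D ∪ (y :: L).toFinset
    have hT : insert y D ∪ L.toFinset = T := by simp [T, insert_union, union_insert]
    have hyT : insert y D ⊆ T := hT ▸ subset_union_left
    have hxT : {x} ∩ T ⊆ D := by
      intro z hz
      obtain ⟨rfl, hzT⟩ := by simpa using hz
      exact (mem_union.1 hzT).resolve_right (by simpa using hx)
    have ih := ih (insert y D) (fun h => hx (List.mem_cons_of_mem y h))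
    rw [hT] at ih
    simp only [stairArea, List.cons_append] at ih ⊢
    have hg_step : 0 ≤ g (insert y D) - g D := sub_nonneg.2 (hgmono _ _ (subset_insert y D))
    have hf_step : 0 ≤ f (insert x (insert y D)) - f (insert x D) :=
      sub_nonneg.2 (hfmono _ _ (insert_subset_insert x (subset_insert y D)))
    have hf_marginal : f (insert x T) - f T ≤ f (insert x (insert y D)) - f (insert y D) := by
      simpa only [insert_eq] using
        hf.union_sub_le_union_sub hyT (hxT.trans (subset_insert y D))
    have hg_marginal : g (insert x D) - g D ≤ g (insert x T) - g T := by
      simpa only [insert_eq] using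
        hg.union_sub_le_union_sub ((subset_insert y D).trans hyT) hxT
    rw [insert_comm y x D]
    nlinarith [mul_le_mul_of_nonneg_left hf_marginal hg_step,
      mul_le_mul_of_nonneg_right hg_marginal hf_step]


lemma mul_sub_le_sub_of_density (hf : Submodular f) (hg : Supermodular g) (hρ : 0 ≤ ρ)
    (hdens : ∀ C, g C ≤ ρ * f C) (hA : g A = ρ * f A) {s U : Finset (Fin n)} (hs : s ⊆ A)
    (hU : Disjoint U A) : ρ * (f (A ∪ U) - f (s ∪ U)) ≤ g (A ∪ U) - g (s ∪ U) := by
  have hAsU : A ∩ (s ∪ U) ⊆ s := by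
    rw [inter_union_distrib_left, disjoint_iff_inter_eq_empty.1 hU.symm, union_empty]
    exact inter_subset_right
  have hAU : A ∪ (s ∪ U) = A ∪ U := by rw [← union_assoc, union_eq_left.2 hs]
  have hf_gain : f (A ∪ U) - f (s ∪ U) ≤ f A - f s := by
    simpa only [hAU, union_eq_left.2 hs] using
      hf.union_sub_le_union_sub subset_union_left hAsU
  have hg_gain : g A - g s ≤ g (A ∪ U) - g (s ∪ U) := by
    simpa only [hAU, union_eq_left.2 hs] using
      hg.union_sub_le_union_sub subset_union_left hAsU
  calc ρ * (f (A ∪ U) - f (s ∪ U)) ≤ ρ * (f A - f s) := mul_le_mul_of_nonneg_left hf_gain hρ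
    _ ≤ g A - g s := by linarith [hdens s]
    _ ≤ g (A ∪ U) - g (s ∪ U) := hg_gain

def exchangeCredit (f g : Finset (Fin n) → ℝ) (ρ : ℝ) (A s U : Finset (Fin n)) : ℝ :=
  (f (A ∪ U) - f (s ∪ U)) * (ρ * f (A ∪ U) - g (A ∪ U))

lemma stairArea_cons_add_exchangeCredit_le (hf : Submodular f) (hfmono : MonotoneSet f)
    (hg : Supermodular g) (hgmono : MonotoneSet g) (hρ : 0 ≤ ρ)
    (hdens : ∀ C, g C ≤ ρ * f C) (hA : g A = ρ * f A) {s U : Finset (Fin n)} {L : List (Fin n)}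
    {x : Fin n} (hsL : s ∪ L.toFinset = A) (hU : Disjoint U A) (hxA : x ∉ A) :
    stairArea f g (s ∪ U) (x :: L) + exchangeCredit f g ρ A s (insert x U) ≤
      stairArea f g (s ∪ U) (L ++ [x]) + exchangeCredit f g ρ A s U := by
  have hs : s ⊆ A := hsL ▸ subset_union_left
  have hDT : s ∪ U ⊆ A ∪ U := union_subset_union hs subset_rfl
  have hxD : {x} ∩ (A ∪ U) ⊆ s ∪ U := fun y hy => by
    obtain ⟨hyx, hyT⟩ := mem_inter.1 hy
    rw [mem_singleton.1 hyx] at hyT ⊢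
    exact mem_union_right s ((mem_union.1 hyT).resolve_left hxA)
  have hstrip := stairArea_cons_add_le hf hfmono hg hgmono (s ∪ U) L
    fun hxL => hxA (hsL ▸ mem_union_right s (List.mem_toFinset.2 hxL))
  rw [union_right_comm, hsL] at hstrip
  have hgain := mul_sub_le_sub_of_density hf hg hρ hdens hA hs hU
  have hshrink : f (insert x (A ∪ U)) - f (insert x (s ∪ U)) ≤ f (A ∪ U) - f (s ∪ U) := by
    have := hf.union_sub_le_union_sub hDT hxD
    simp only [← insert_eq] at this
    linarith
  have hE : 0 ≤ f (insert x (A ∪ U)) - f (A ∪ U) := sub_nonneg.2 (hfmono _ _ (subset_insert _ _))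
  have hslack : 0 ≤ ρ * f (A ∪ U) - g (A ∪ U) := sub_nonneg.2 (hdens _)
  simp only [exchangeCredit, union_insert]
  nlinarith [mul_le_mul_of_nonneg_right hshrink hslack,
    mul_le_mul_of_nonneg_left (mul_le_mul_of_nonneg_left hshrink hρ) hE]

lemma stairArea_le_filter_append (hf : Submodular f) (hfmono : MonotoneSet f)
    (hg : Supermodular g) (hgmono : MonotoneSet g) (hρ : 0 ≤ ρ)
    (hdens : ∀ C, g C ≤ ρ * f C) (hA : g A = ρ * f A) (l : List (Fin n))
    {s U : Finset (Fin n)} (hs : s ⊆ A) (hU : Disjoint U A) (hl : A ⊆ s ∪ l.toFinset) :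
    stairArea f g (s ∪ U) l ≤
      stairArea f g (s ∪ U) (l.filter (· ∈ A) ++ l.filter (· ∉ A)) +
        exchangeCredit f g ρ A s U := by
  induction l generalizing s U with
  | nil =>
    have hsA : s = A := hs.antisymm (by simpa using hl)
    simp [exchangeCredit, hsA]
  | cons x l ih =>
    by_cases hxA : x ∈ A
    · have ih := ih (s := insert x s) (U := U) (insert_subset hxA hs) hU (by
        simpa [insert_union, union_insert] using hl)
      have hcredit : exchangeCredit f g ρ A (insert x s) U ≤ exchangeCredit f g ρ A s U :=
        mul_le_mul_of_nonneg_right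
          (by gcongr; exact hfmono _ _ (union_subset_union (subset_insert x s) subset_rfl))
          (sub_nonneg.2 (hdens _))
      have hin : (x :: l).filter (· ∈ A) = x :: l.filter (· ∈ A) := by simp [hxA]
      have hout : (x :: l).filter (· ∉ A) = l.filter (· ∉ A) := by simp [hxA]
      rw [hin, hout, List.cons_append]
      simp only [stairArea, insert_union] at ih ⊢
      linarith
    · set LA := l.filter (· ∈ A)
      set LB := l.filter (· ∉ A)
      have hl' : A ⊆ s ∪ l.toFinset := fun y hy => by
        have hyx : y ≠ x := fun h => hxA (h ▸ hy)
        simpa [hyx] using hl hy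
      have hsLA : s ∪ LA.toFinset = A := union_toFinset_filter_mem_eq hs hl'
      have hfront : stairArea f g (s ∪ U) (x :: l) ≤
          stairArea f g (s ∪ U) (x :: (LA ++ LB)) + exchangeCredit f g ρ A s (insert x U) := by
        have ih := ih hs (disjoint_insert_left.2 ⟨hxA, hU⟩) hl'
        rw [union_insert] at ih
        simp only [stairArea]
        linarith
      have hcons : stairArea f g (s ∪ U) (x :: (LA ++ LB)) =
          stairArea f g (s ∪ U) (x :: LA) + stairArea f g (s ∪ U ∪ (LA ++ [x]).toFinset) LB := by
        rw [← List.cons_append, stairArea_append]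
        congr 2
        simp [union_comm]
      have hstep := stairArea_cons_add_exchangeCredit_le hf hfmono hg hgmono hρ hdens hA
        (U := U) hsLA hU hxA
      have hin : (x :: l).filter (· ∈ A) = LA := by simp [hxA, LA]
      have hout : (x :: l).filter (· ∉ A) = x :: LB := by simp [hxA, LB]
      rw [hin, hout, List.append_cons, stairArea_append (l₁ := LA ++ [x])]
      linarith

end Exchange

section Search

variable {n : ℕ}

lemma mem_toFinset_take_ofFn {σ : Equiv.Perm (Fin n)} {x : Fin n} {k : ℕ} :
    x ∈ ((List.ofFn σ).take k).toFinset ↔ (σ.symm x : ℕ) < k := by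
  rw [List.mem_toFinset, List.mem_take_iff_getElem]
  constructor
  · rintro ⟨i, hi, rfl⟩
    simp only [List.getElem_ofFn, Equiv.symm_apply_apply]
    omega
  · intro hx
    exact ⟨σ.symm x, by simp [hx], by simp⟩

lemma searchCost_eq_sub_stairArea (f g : Finset (Fin n) → ℝ) (σ : Equiv.Perm (Fin n)) :
    searchCost f g σ = g univ * f univ - g ∅ * f ∅ - stairArea f g ∅ (List.ofFn σ) := by
  have hseg (k : Fin n) :
      searchSegment σ (σ k) = ((List.ofFn σ).take ((k : ℕ) + 1)).toFinset := by
    ext x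
    rw [mem_toFinset_take_ofFn]
    simp only [searchSegment, mem_filter, mem_univ, true_and, Equiv.symm_apply_apply, Fin.le_def]
    omega
  have hseg' (k : Fin n) : searchSegment σ (σ k) \ {σ k} = ((List.ofFn σ).take k).toFinset := by
    ext x
    rw [mem_toFinset_take_ofFn]
    simp only [searchSegment, mem_sdiff, mem_filter, mem_univ, true_and, mem_singleton,
      Equiv.symm_apply_apply, Fin.le_def, ← σ.symm_apply_eq, ← Fin.val_inj]
    omega
  have huniv : (List.ofFn σ).toFinset = univ := eq_univ_of_forall fun x => by
    simpa using σ.surjective x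
  have hsum := sum_range_take_eq_sub_stairArea f g ∅ (List.ofFn σ)
  simp only [empty_union, List.length_ofFn, huniv] at hsum
  rw [searchCost, ← Equiv.sum_comp σ, ← hsum, ← Fin.sum_univ_eq_sum_range]
  exact sum_congr rfl fun k _ => by rw [hseg', hseg]

lemma exists_perm_ofFn_eq {l : List (Fin n)} (hl : l.Nodup) (hlen : l.length = n) :
    ∃ τ : Equiv.Perm (Fin n), List.ofFn τ = l := by
  have hinj : Function.Injective fun k : Fin n => l[(k : ℕ)] := fun i j hij =>
    Fin.ext ((hl.getElem_inj_iff).1 hij)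
  refine ⟨Equiv.ofBijective _ (Finite.injective_iff_bijective.1 hinj), ?_⟩
  exact List.ext_getElem (by simp [hlen]) fun k _ _ => by simp

lemma initialSegmentOf_of_ofFn_eq_append {τ : Equiv.Perm (Fin n)} {A : Finset (Fin n)}
    {l₁ l₂ : List (Fin n)} (h : List.ofFn τ = l₁ ++ l₂) (h₁ : ∀ x ∈ l₁, x ∈ A)
    (h₂ : ∀ x ∈ l₂, x ∉ A) : InitialSegmentOf τ A := by
  have hmem (k : Fin n) : τ k ∈ A ↔ (k : ℕ) < l₁.length := by
    have hk : τ k = (l₁ ++ l₂)[(k : ℕ)]'(by simp [← h]) := by simp [← h]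
    rw [hk, List.getElem_append]
    split_ifs with hlt
    · simp [h₁ _ (List.getElem_mem _), hlt]
    · simp [h₂ _ (List.getElem_mem _), hlt]
  intro i j hj hle
  rw [← τ.apply_symm_apply i, hmem]
  rw [← τ.apply_symm_apply j, hmem] at hj
  exact lt_of_le_of_lt (Fin.le_def.1 hle) hj

end Search

section FrontLoading

variable {n : ℕ} {f g : Finset (Fin n) → ℝ} {A : Finset (Fin n)} {ρ : ℝ}

lemma exists_searchCost_le_initialSegmentOf (hf : Submodular f) (hfmono : MonotoneSet f)
    (hg : Supermodular g) (hgmono : MonotoneSet g) (hρ : 0 ≤ ρ)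
    (hdens : ∀ C, g C ≤ ρ * f C) (hA : g A = ρ * f A) (σ : Equiv.Perm (Fin n)) :
    ∃ τ : Equiv.Perm (Fin n), searchCost f g τ ≤ searchCost f g σ ∧ InitialSegmentOf τ A := by
  have hperm : ((List.ofFn σ).filter (· ∈ A) ++ (List.ofFn σ).filter (· ∉ A)).Perm
      (List.ofFn σ) := by
    simpa using List.filter_append_perm (· ∈ A) (List.ofFn σ)
  obtain ⟨τ, hτ⟩ := exists_perm_ofFn_eq (hperm.nodup_iff.2 (List.nodup_ofFn.2 σ.injective))
    (by rw [hperm.length_eq, List.length_ofFn])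
  refine ⟨τ, ?_, initialSegmentOf_of_ofFn_eq_append hτ (by simp) (by simp)⟩
  have hA_le : A ⊆ ∅ ∪ (List.ofFn σ).toFinset := fun x _ => by simpa using σ.surjective x
  have h := stairArea_le_filter_append hf hfmono hg hgmono hρ hdens hA (List.ofFn σ)
    (empty_subset A) (disjoint_empty_left A) hA_le
  simp only [exchangeCredit, union_empty, hA, sub_self, mul_zero, add_zero] at h
  rw [searchCost_eq_sub_stairArea, searchCost_eq_sub_stairArea, hτ]
  linarith

lemma le_div_mul_of_forall_div_le (hf0 : f ∅ = 0) (hg0 : g ∅ = 0)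
    (hfpos : ∀ C : Finset (Fin n), C.Nonempty → 0 < f C)
    (hAmax : ∀ C : Finset (Fin n), C.Nonempty → g C / f C ≤ g A / f A) (C : Finset (Fin n)) :
    g C ≤ g A / f A * f C := by
  rcases C.eq_empty_or_nonempty with rfl | hC
  · simp [hf0, hg0]
  · exact (div_le_iff₀ (hfpos C hC)).1 (hAmax C hC)

end FrontLoading

/-- Theorem 1 (second part): for any maximum density set `A` there is an optimal
search having `A` as an initial segment. -/
theorem exists_optimal_with_initial_segment {n : ℕ} (f g : Finset (Fin n) → ℝ)
    (hf : Submodular f) (hfmono : MonotoneSet f) (hf0 : f ∅ = 0)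
    (hfpos : ∀ A : Finset (Fin n), A.Nonempty → 0 < f A)
    (hg : Supermodular g) (hgmono : MonotoneSet g) (hg0 : g ∅ = 0)
    (hgnonneg : ∀ A : Finset (Fin n), 0 ≤ g A)
    (A : Finset (Fin n)) (hA : A.Nonempty)
    (hAmax : ∀ C : Finset (Fin n), C.Nonempty → g C / f C ≤ g A / f A) :
    ∃ π' : Equiv.Perm (Fin n),
      (∀ π : Equiv.Perm (Fin n), searchCost f g π' ≤ searchCost f g π) ∧
      InitialSegmentOf π' A := by
  obtain ⟨σ, -, hσ⟩ := exists_min_image univ (searchCost f g) univ_nonempty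
  have hfA := hfpos A hA
  obtain ⟨τ, hτσ, hτA⟩ := exists_searchCost_le_initialSegmentOf hf hfmono hg hgmono
    (div_nonneg (hgnonneg A) hfA.le) (le_div_mul_of_forall_div_le hf0 hg0 hfpos hAmax)
    (div_mul_cancel₀ _ hfA.ne').symm σ
  exact ⟨τ, fun π => hτσ.trans (hσ π (mem_univ π)), hτA⟩
end

section
/- Let f be a non-decreasing submodular function with f(∅)=0 and f(s)>0 for all s, and total curvature κ_f = 1 − min_{s∈S} (f(S)−f(S−s))/f(s). Then for every nonempty A ⊆ S: f(S) − f(S\A) ≥ (1−κ_f) · f(A). -/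
open Finset

/-! `1 - κ` is the least ratio `(f S - f (S - s)) / f {s}`. Submodularity makes `f` subadditive,
so `f A ≤ ∑_{s ∈ A} f {s}`, and makes the marginals `f S - f (S - s)` for `s ∈ A` sum to at most
`f S - f (S \ A)`; comparing the two sums term by term gives the bound. -/

namespace Submodular

variable {n : ℕ} {f : Finset (Fin n) → ℝ}

theorem le_sum_singleton (hf : Submodular f) (hf0 : f ∅ = 0) (B : Finset (Fin n)) :
    f B ≤ ∑ s ∈ B, f {s} := by
  induction B using Finset.induction_on with
  | empty => simp [hf0]
  | @insert a B ha ih =>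
    have h := hf {a} B
    rw [← insert_eq, singleton_inter_of_notMem ha, hf0] at h
    rw [sum_insert ha]
    linarith

theorem sum_sub_sdiff_singleton_le (hf : Submodular f) (X B : Finset (Fin n)) :
    ∑ s ∈ B, (f X - f (X \ {s})) ≤ f X - f (X \ B) := by
  induction B using Finset.induction_on with
  | empty => simp
  | @insert a B ha ih =>
    have h := hf (X \ {a}) (X \ B)
    have hunion : X \ {a} ∪ X \ B = X := by
      rw [← sdiff_inter_distrib_right, singleton_inter_of_notMem ha, sdiff_empty]
    rw [hunion, ← sdiff_union_distrib, ← insert_eq] at h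
    rw [sum_insert ha]
    linarith

end Submodular

theorem curvature_bound_general {n : ℕ} [NeZero n] (f : Finset (Fin n) → ℝ)
    (hf : Submodular f) (hfmono : MonotoneSet f) (hf0 : f ∅ = 0)
    (hfpos : ∀ s : Fin n, 0 < f {s})
    (κ : ℝ)
    (hκ : κ = 1 - Finset.univ.inf' Finset.univ_nonempty
      (fun s : Fin n => (f Finset.univ - f (Finset.univ \ {s})) / f {s}))
    (A : Finset (Fin n)) :
    (1 - κ) * f A ≤ f Finset.univ - f (Finset.univ \ A) := by
  rw [hκ, sub_sub_cancel]
  set c := univ.inf' univ_nonempty fun s : Fin n => (f univ - f (univ \ {s})) / f {s}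
  have hc : 0 ≤ c := le_inf' _ _ fun s _ =>
    div_nonneg (sub_nonneg.2 (hfmono _ _ sdiff_subset)) (hfpos s).le
  have hmarginal (s : Fin n) : c * f {s} ≤ f univ - f (univ \ {s}) :=
    (le_div_iff₀ (hfpos s)).1 (inf'_le _ (mem_univ s))
  calc c * f A ≤ c * ∑ s ∈ A, f {s} := mul_le_mul_of_nonneg_left (hf.le_sum_singleton hf0 A) hc
    _ = ∑ s ∈ A, c * f {s} := mul_sum _ _ _
    _ ≤ ∑ s ∈ A, (f univ - f (univ \ {s})) := sum_le_sum fun s _ => hmarginal s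
    _ ≤ f univ - f (univ \ A) := hf.sum_sub_sdiff_singleton_le univ A

theorem curvature_bound {n : ℕ} [NeZero n] (f : Finset (Fin n) → ℝ)
    (hf : Submodular f) (hfmono : MonotoneSet f) (hf0 : f ∅ = 0)
    (hfpos : ∀ s : Fin n, 0 < f {s})
    (κ : ℝ)
    (hκ : κ = 1 - Finset.univ.inf' Finset.univ_nonempty
      (fun s : Fin n => (f Finset.univ - f (Finset.univ \ {s})) / f {s}))
    (A : Finset (Fin n)) (hA : A.Nonempty) :
    (1 - κ) * f A ≤ f Finset.univ - f (Finset.univ \ A) :=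
  curvature_bound_general f hf hfmono hf0 hfpos κ hκ A
end

section
/- Suppose S has maximum density, f has total curvature κ_f, and the dual g^# has total curvature κ_{g^#}. Then for every nonempty A ⊆ S, the density satisfies (1−κ_f)(1−κ_{g^#}) ρ* ≤ ρ(A) ≤ ρ*, where ρ* = g(S)/f(S). -/
open Finset

/-! Curvature of a polymatroid `h` gives `(1 - κ_h) h(A) ≤ h(S) - h(S \ A)`: add the elements of
`A` one at a time, bounding each `h(s)` by its marginal value on `S` (the definition of `κ_h`) and
that in turn by its marginal value on the current complement (diminishing returns). Applied to `f`,
and with maximum density of `S` (i.e. `g ≤ ρ* f`) on `S \ A`, this gives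
`g^#(A) ≥ ρ* (1 - κ_f) f(A)`; applied to the submodular dual `g^#`, whose dual is `g`, it gives
`g(A) ≥ (1 - κ_{g^#}) g^#(A)`. -/

noncomputable def totalCurvature {n : ℕ} [NeZero n] (h : Finset (Fin n) → ℝ) : ℝ :=
  1 - univ.inf' univ_nonempty (fun s : Fin n => (h univ - h (univ \ {s})) / h {s})

section SetFunction

variable {n : ℕ} {h : Finset (Fin n) → ℝ}

theorem MonotoneSet.nonneg (hmono : MonotoneSet h) (h0 : h ∅ = 0) (A : Finset (Fin n)) :
    0 ≤ h A :=
  h0 ▸ hmono ∅ A (empty_subset A)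

theorem Submodular.union_le_add (hsub : Submodular h) (h0 : h ∅ = 0) {A B : Finset (Fin n)}
    (hAB : Disjoint A B) : h (A ∪ B) ≤ h A + h B := by
  simpa [disjoint_iff_inter_eq_empty.mp hAB, h0] using hsub A B

theorem Submodular.sub_sdiff_singleton_le (hsub : Submodular h) {a : Fin n}
    {B C : Finset (Fin n)} (ha : a ∈ B) (hBC : B ⊆ C) :
    h C - h (C \ {a}) ≤ h B - h (B \ {a}) := by
  have hunion : B ∪ (C \ {a}) = C := by
    ext x
    by_cases hx : x = a <;> aesop
  have hinter : B ∩ (C \ {a}) = B \ {a} := by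
    rw [← inter_sdiff_assoc, inter_eq_left.mpr hBC]
  have := hsub B (C \ {a})
  rw [hunion, hinter] at this
  linarith

theorem Submodular.mul_le_sub_compl (hsub : Submodular h) (h0 : h ∅ = 0) {c : ℝ} (hc : 0 ≤ c)
    (hstep : ∀ s : Fin n, c * h {s} ≤ h univ - h (univ \ {s})) (A : Finset (Fin n)) :
    c * h A ≤ h univ - h Aᶜ := by
  induction A using Finset.induction_on with
  | empty => simp [h0]
  | @insert a s ha ih =>
    have hsubadd : h (insert a s) ≤ h {a} + h s := by
      rw [insert_eq]
      exact hsub.union_le_add h0 (disjoint_singleton_left.mpr ha)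
    have hmarginal : h univ - h (univ \ {a}) ≤ h sᶜ - h (sᶜ \ {a}) :=
      hsub.sub_sdiff_singleton_le (mem_compl.mpr ha) (subset_univ _)
    calc c * h (insert a s) ≤ c * h {a} + c * h s := by
          rw [← mul_add]; exact mul_le_mul_of_nonneg_left hsubadd hc
      _ ≤ (h univ - h (univ \ {a})) + (h univ - h sᶜ) := add_le_add (hstep a) ih
      _ ≤ (h sᶜ - h (sᶜ \ {a})) + (h univ - h sᶜ) := by gcongr
      _ = h univ - h (insert a s)ᶜ := by rw [compl_insert, sdiff_singleton_eq_erase]; ring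

variable [NeZero n]

theorem one_sub_totalCurvature_nonneg (hmono : MonotoneSet h) (h0 : h ∅ = 0) :
    0 ≤ 1 - totalCurvature h := by
  rw [totalCurvature, sub_sub_cancel]
  exact le_inf' _ _ fun s _ =>
    div_nonneg (sub_nonneg.mpr (hmono _ _ sdiff_subset)) (hmono.nonneg h0 _)

theorem one_sub_totalCurvature_mul_le (hmono : MonotoneSet h) (h0 : h ∅ = 0) (s : Fin n) :
    (1 - totalCurvature h) * h {s} ≤ h univ - h (univ \ {s}) := by
  rcases (hmono.nonneg h0 {s}).eq_or_lt with hs | hs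
  · rw [← hs, mul_zero, sub_nonneg]
    exact hmono _ _ sdiff_subset
  · rw [← le_div_iff₀ hs, totalCurvature, sub_sub_cancel]
    exact inf'_le _ (mem_univ s)

theorem Submodular.one_sub_totalCurvature_mul_le_sub_compl (hsub : Submodular h)
    (hmono : MonotoneSet h) (h0 : h ∅ = 0) (A : Finset (Fin n)) :
    (1 - totalCurvature h) * h A ≤ h univ - h Aᶜ :=
  hsub.mul_le_sub_compl h0 (one_sub_totalCurvature_nonneg hmono h0)
    (one_sub_totalCurvature_mul_le hmono h0) A

end SetFunction

section Dual

variable {n : ℕ} {g : Finset (Fin n) → ℝ}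

theorem Supermodular.submodular_dual (hg : Supermodular g) : Submodular (dual g) := by
  intro A B
  have := hg Aᶜ Bᶜ
  simp only [dual, compl_union, compl_inter]
  linarith

theorem MonotoneSet.dual (hmono : MonotoneSet g) : MonotoneSet (dual g) := fun A B hAB => by
  have := hmono _ _ (compl_subset_compl.mpr hAB)
  simp only [_root_.dual]
  linarith

theorem dual_empty : dual g ∅ = 0 := by
  simp [dual]

theorem dual_dual (hg0 : g ∅ = 0) (A : Finset (Fin n)) : dual (dual g) A = g A := by
  simp [dual, hg0]

end Dual

theorem density_curvature_bounds_general {n : ℕ} [NeZero n] (f g : Finset (Fin n) → ℝ)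
    (hf : Submodular f) (hfmono : MonotoneSet f) (hf0 : f ∅ = 0)
    (hfpos : ∀ A : Finset (Fin n), A.Nonempty → 0 < f A)
    (hg : Supermodular g) (hgmono : MonotoneSet g) (hg0 : g ∅ = 0)
    (hSmax : ∀ A : Finset (Fin n), A.Nonempty →
      g A / f A ≤ g Finset.univ / f Finset.univ)
    (κf κg : ℝ)
    (hκf : κf = 1 - Finset.univ.inf' Finset.univ_nonempty
      (fun s : Fin n => (f Finset.univ - f (Finset.univ \ {s})) / f {s}))
    (hκg : κg = 1 - Finset.univ.inf' Finset.univ_nonempty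
      (fun s : Fin n =>
        (dual g Finset.univ - dual g (Finset.univ \ {s})) / dual g {s}))
    (A : Finset (Fin n)) (hA : A.Nonempty) :
    (1 - κf) * (1 - κg) * (g Finset.univ / f Finset.univ) ≤ g A / f A ∧
      g A / f A ≤ g Finset.univ / f Finset.univ := by
  replace hκf : κf = totalCurvature f := hκf
  replace hκg : κg = totalCurvature (dual g) := hκg
  set ρ := g univ / f univ
  have hfS : 0 < f univ := hfpos univ univ_nonempty
  have hρ : 0 ≤ ρ := div_nonneg (hgmono.nonneg hg0 univ) hfS.le
  have hgS : g univ = ρ * f univ := (div_mul_cancel₀ _ hfS.ne').symm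
  have hcompl : g Aᶜ ≤ ρ * f Aᶜ := by
    rcases Aᶜ.eq_empty_or_nonempty with he | hne
    · simp [he, hf0, hg0]
    · exact (div_le_iff₀ (hfpos _ hne)).mp (hSmax _ hne)
  have hfA : (1 - κf) * f A ≤ f univ - f Aᶜ :=
    hκf ▸ hf.one_sub_totalCurvature_mul_le_sub_compl hfmono hf0 A
  have hgA : (1 - κg) * dual g A ≤ g A :=
    (hκg ▸ hg.submodular_dual.one_sub_totalCurvature_mul_le_sub_compl hgmono.dual dual_empty
      A).trans_eq (dual_dual hg0 A)
  have hdualA : ρ * ((1 - κf) * f A) ≤ dual g A :=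
    calc ρ * ((1 - κf) * f A) ≤ ρ * (f univ - f Aᶜ) := by gcongr
      _ = g univ - ρ * f Aᶜ := by rw [hgS]; ring
      _ ≤ dual g A := by rw [dual]; linarith
  have hκg0 : 0 ≤ 1 - κg := hκg ▸ one_sub_totalCurvature_nonneg hgmono.dual dual_empty
  refine ⟨(le_div_iff₀ (hfpos A hA)).mpr ?_, hSmax A hA⟩
  calc (1 - κf) * (1 - κg) * ρ * f A = (1 - κg) * (ρ * ((1 - κf) * f A)) := by ring
    _ ≤ (1 - κg) * dual g A := by gcongr
    _ ≤ g A := hgA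

/-- Lemma 4: density bounds in terms of the total curvatures of `f` and `g^#`,
when the whole ground set has maximum density. -/
theorem density_curvature_bounds {n : ℕ} [NeZero n] (f g : Finset (Fin n) → ℝ)
    (hf : Submodular f) (hfmono : MonotoneSet f) (hf0 : f ∅ = 0)
    (hfpos : ∀ A : Finset (Fin n), A.Nonempty → 0 < f A)
    (hg : Supermodular g) (hgmono : MonotoneSet g) (hg0 : g ∅ = 0)
    (hgnonneg : ∀ A : Finset (Fin n), 0 ≤ g A)
    (hgprop : ∀ A : Finset (Fin n), A ≠ Finset.univ → g A < g Finset.univ)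
    (hSmax : ∀ A : Finset (Fin n), A.Nonempty →
      g A / f A ≤ g Finset.univ / f Finset.univ)
    (κf κg : ℝ)
    (hκf : κf = 1 - Finset.univ.inf' Finset.univ_nonempty
      (fun s : Fin n => (f Finset.univ - f (Finset.univ \ {s})) / f {s}))
    (hκg : κg = 1 - Finset.univ.inf' Finset.univ_nonempty
      (fun s : Fin n =>
        (dual g Finset.univ - dual g (Finset.univ \ {s})) / dual g {s}))
    (A : Finset (Fin n)) (hA : A.Nonempty) :
    (1 - κf) * (1 - κg) * (g Finset.univ / f Finset.univ) ≤ g A / f A ∧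
      g A / f A ≤ g Finset.univ / f Finset.univ :=
  density_curvature_bounds_general f g hf hfmono hf0 hfpos hg hgmono hg0 hSmax κf κg hκf hκg A hA
end

section
/- For any permutation π of S with reverse π', the quantity ε_{f,g}(π) = ∑_j (f(S_j^π) − f(S_j^π − j))(g(S_j^π) − g(S_j^π − j)) satisfies ε_{f,g}(π) = ε_{f^#, g^#}(π'). -/
open Finset

def eps {n : ℕ} (f g : Finset (Fin n) → ℝ) (σ : Equiv.Perm (Fin n)) : ℝ :=
  ∑ j, (f (searchSegment σ j) - f (searchSegment σ j \ {j})) *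
    (g (searchSegment σ j) - g (searchSegment σ j \ {j}))

/-
Under the reversed order an element `j` is preceded exactly by the elements that follow it
under `π`, so the prefix of `j` in `π'` is the complement of the strict prefix of `j` in `π`, and
vice versa. Since `dual f (Aᶜ) = f univ - f A`, the marginal contributions of `j` to `dual f`
along `π'` and to `f` along `π` coincide term by term.
-/

lemma reversePerm_reversePerm {n : ℕ} (π : Equiv.Perm (Fin n)) :
    reversePerm (reversePerm π) = π := by
  ext k
  simp [reversePerm]

lemma compl_searchSegment_reversePerm {n : ℕ} (π : Equiv.Perm (Fin n)) (j : Fin n) :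
    (searchSegment (reversePerm π) j)ᶜ = searchSegment π j \ {j} := by
  ext i
  simp only [searchSegment, reversePerm, mem_compl, mem_filter, mem_univ, true_and, mem_sdiff,
    mem_singleton, Equiv.symm_trans_apply, Fin.revPerm_symm, Fin.revPerm_apply, Fin.rev_le_rev,
    not_le, lt_iff_le_and_ne, π.symm.injective.ne_iff]

lemma searchSegment_reversePerm_sdiff {n : ℕ} (π : Equiv.Perm (Fin n)) (j : Fin n) :
    searchSegment (reversePerm π) j \ {j} = (searchSegment π j)ᶜ := by
  rw [← compl_searchSegment_reversePerm, reversePerm_reversePerm]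

lemma dual_sub_dual {n : ℕ} (f : Finset (Fin n) → ℝ) (A B : Finset (Fin n)) :
    dual f A - dual f B = f Bᶜ - f Aᶜ :=
  sub_sub_sub_cancel_left _ _ _

theorem eps_duality_general {n : ℕ} (f g : Finset (Fin n) → ℝ)
    (π : Equiv.Perm (Fin n)) :
    eps f g π = eps (dual f) (dual g) (reversePerm π) := by
  refine sum_congr rfl fun j _ => ?_
  simp only [dual_sub_dual, compl_searchSegment_reversePerm, searchSegment_reversePerm_sdiff,
    compl_compl]

theorem eps_duality {n : ℕ} (f g : Finset (Fin n) → ℝ)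
    (hf0 : f ∅ = 0) (hg0 : g ∅ = 0) (π : Equiv.Perm (Fin n)) :
    eps f g π = eps (dual f) (dual g) (reversePerm π) :=
  eps_duality_general f g π
end

section
/- Let f be submodular with f(∅)=0, f(s)>0 for all s, and total curvature κ_f, and let g be supermodular with g(∅)=0. Let π_1 be a permutation ordering elements in non-increasing order of f({j}). Then (1−κ_f)·ε(π_1) ≤ min over all permutations π of ε(π), where ε(π) = ∑_j (f(S_j^π) − f(S_j^π − j))(g(S_j^π) − g(S_j^π − j)). -/
open Finset

/-! Write `Δ_σ h (j)` for the marginal of `h` at `j` along the order `σ`. Submodularity puts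
`Δ_σ f (j)` between `(1 - κ_f) f{j}` and `f{j}`, and the marginals of `g` are nonnegative, so
`(1 - κ_f) ε(π₁) ≤ (1 - κ_f) ∑ f{j} Δ_{π₁} g (j)` and `(1 - κ_f) ∑ f{j} Δ_π g (j) ≤ ε(π)`.
To compare the two weighted sums, note that on every initial segment `A` of `π₁` the marginals
`Δ_{π₁} g` telescope to `g A`, while supermodularity gives `g A ≤ ∑_{j ∈ A} Δ_π g (j)` for any `π`.
The superlevel sets of `j ↦ f{j}` are initial segments of `π₁`, so a layer-cake decomposition of
the weights `f{j}` yields the comparison. -/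

section SetFunctions

variable {n : ℕ}

theorem insert_union_inter_eq {A B : Finset (Fin n)} (hAB : A ⊆ B) {j : Fin n} (hj : j ∉ B) :
    insert j A ∪ B = insert j B ∧ insert j A ∩ B = A := by
  refine ⟨by rw [insert_union, union_eq_right.mpr hAB], ?_⟩
  rw [insert_inter_of_notMem hj, inter_eq_left.mpr hAB]

theorem Supermodular.sub_le_sub_insert {g : Finset (Fin n) → ℝ} (hg : Supermodular g)
    {A B : Finset (Fin n)} (hAB : A ⊆ B) {j : Fin n} (hj : j ∉ B) :
    g (insert j A) - g A ≤ g (insert j B) - g B := by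
  have h := hg (insert j A) B
  rw [(insert_union_inter_eq hAB hj).1, (insert_union_inter_eq hAB hj).2] at h
  linarith

theorem Submodular.neg {f : Finset (Fin n) → ℝ} (hf : Submodular f) : Supermodular (-f) :=
  fun A B => by simp only [Pi.neg_apply]; linarith [hf A B]

theorem Submodular.sub_insert_le {f : Finset (Fin n) → ℝ} (hf : Submodular f)
    {A B : Finset (Fin n)} (hAB : A ⊆ B) {j : Fin n} (hj : j ∉ B) :
    f (insert j B) - f B ≤ f (insert j A) - f A := by
  have h := hf.neg.sub_le_sub_insert hAB hj
  simp only [Pi.neg_apply] at h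
  linarith

end SetFunctions

theorem sum_mul_nonneg_of_sum_superlevel_nonneg {ι : Type*} (s : Finset ι) (w d : ι → ℝ)
    (hw : ∀ i ∈ s, 0 ≤ w i) (hd : ∀ t, 0 ≤ ∑ i ∈ s with t < w i, d i) :
    0 ≤ ∑ i ∈ s, w i * d i := by
  induction s using Finset.strongInduction generalizing w with
  | H s ih =>
  rcases s.eq_empty_or_nonempty with rfl | hs
  · simp
  obtain ⟨m, hm, hmin⟩ := s.exists_min_image w hs
  -- subtract the minimal weight: what remains lives on a strictly smaller superlevel set
  have hrest := ih (s.filter (w m < w ·)) (filter_ssubset.2 ⟨m, hm, lt_irrefl _⟩)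
    (fun i => w i - w m) (fun i hi => by simp only [mem_filter] at hi; linarith [hi.2])
    (fun t => by
      convert hd (max t 0 + w m) using 2
      ext i
      simp only [mem_filter]
      constructor
      · rintro ⟨⟨hi, hlt⟩, ht⟩; exact ⟨hi, by rcases max_cases t 0 with h | h <;> linarith⟩
      · rintro ⟨hi, ht⟩; exact ⟨⟨hi, by linarith [le_max_right t 0]⟩, by linarith [le_max_left t 0]⟩)
  have htotal : ∑ i ∈ s, d i = ∑ i ∈ s with w m - 1 < w i, d i := by
    rw [filter_true_of_mem fun i hi => by linarith [hmin i hi]]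
  have hsplit : ∑ i ∈ s, w i * d i
      = w m * ∑ i ∈ s, d i + ∑ i ∈ s with w m < w i, (w i - w m) * d i := by
    rw [sum_filter, mul_sum, ← sum_add_distrib]
    refine sum_congr rfl fun i hi => ?_
    split_ifs with h
    · ring
    · rw [le_antisymm (not_lt.1 h) (hmin i hi)]; ring
  rw [hsplit, htotal]
  exact add_nonneg (mul_nonneg (hw m hm) (hd _)) hrest

section Marginal

variable {n : ℕ}

def marginal (f : Finset (Fin n) → ℝ) (σ : Equiv.Perm (Fin n)) (j : Fin n) : ℝ :=
  f (searchSegment σ j) - f (searchSegment σ j \ {j})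

theorem mem_searchSegment {σ : Equiv.Perm (Fin n)} {i j : Fin n} :
    i ∈ searchSegment σ j ↔ σ.symm i ≤ σ.symm j := by
  simp [searchSegment]

theorem insert_searchSegment_sdiff (σ : Equiv.Perm (Fin n)) (j : Fin n) :
    insert j (searchSegment σ j \ {j}) = searchSegment σ j := by
  rw [sdiff_singleton_eq_erase, insert_erase (mem_searchSegment.2 le_rfl)]

theorem marginal_nonneg {g : Finset (Fin n) → ℝ} (hg : MonotoneSet g)
    (σ : Equiv.Perm (Fin n)) (j : Fin n) : 0 ≤ marginal g σ j :=
  sub_nonneg.2 (hg _ _ sdiff_subset)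

theorem Submodular.marginal_le_singleton {f : Finset (Fin n) → ℝ} (hf : Submodular f)
    (hf0 : f ∅ = 0) (σ : Equiv.Perm (Fin n)) (j : Fin n) : marginal f σ j ≤ f {j} := by
  have h := hf.sub_insert_le (empty_subset (searchSegment σ j \ {j}))
    (notMem_sdiff_of_mem_right (mem_singleton_self j))
  rwa [insert_searchSegment_sdiff, insert_empty, hf0, sub_zero] at h

theorem Submodular.sub_sdiff_singleton_le_marginal {f : Finset (Fin n) → ℝ} (hf : Submodular f)
    (σ : Equiv.Perm (Fin n)) (j : Fin n) : f univ - f (univ \ {j}) ≤ marginal f σ j := by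
  have h := hf.sub_insert_le (sdiff_subset_sdiff (subset_univ (searchSegment σ j)) subset_rfl)
    (notMem_sdiff_of_mem_right (mem_singleton_self j))
  have huniv : insert j (univ \ {j}) = univ := by
    rw [sdiff_singleton_eq_erase, insert_erase (mem_univ j)]
  rwa [insert_searchSegment_sdiff, huniv] at h

theorem Supermodular.le_sum_marginal {g : Finset (Fin n) → ℝ} (hg : Supermodular g)
    (hg0 : g ∅ = 0) (σ : Equiv.Perm (Fin n)) (A : Finset (Fin n)) :
    g A ≤ ∑ j ∈ A, marginal g σ j := by
  induction A using Finset.induction_on_max_value σ.symm with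
  | empty => simp [hg0]
  | insert a A haA hmax ih =>
    have hsub : A ⊆ searchSegment σ a \ {a} := fun x hx =>
      mem_sdiff.2 ⟨mem_searchSegment.2 (hmax x hx), fun h => haA (mem_singleton.1 h ▸ hx)⟩
    have h : g (insert a A) - g A ≤ marginal g σ a := by
      simpa only [marginal, insert_searchSegment_sdiff] using
        hg.sub_le_sub_insert hsub (notMem_sdiff_of_mem_right (mem_singleton_self a))
    rw [sum_insert haA]
    linarith

theorem sum_marginal_of_initialSegment {g : Finset (Fin n) → ℝ} (hg0 : g ∅ = 0)
    {σ : Equiv.Perm (Fin n)} {A : Finset (Fin n)} (hA : InitialSegment σ A) :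
    ∑ j ∈ A, marginal g σ j = g A := by
  induction A using Finset.induction_on_max_value σ.symm with
  | empty => simp [hg0]
  | insert a A haA hmax ih =>
    have hseg : searchSegment σ a = insert a A := by
      ext i
      rw [mem_searchSegment]
      refine ⟨fun hi => hA i a (mem_insert_self a A) hi, fun hi => ?_⟩
      rcases mem_insert.1 hi with rfl | hi
      · exact le_rfl
      · exact hmax i hi
    have hA' : InitialSegment σ A := fun i j hj hij => by
      rcases mem_insert.1 (hA i j (mem_insert_of_mem hj) hij) with rfl | hi
      · exact absurd (σ.symm.injective (le_antisymm (hmax j hj) hij) ▸ hj) haA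
      · exact hi
    rw [sum_insert haA, ih hA', marginal, hseg, sdiff_singleton_eq_erase, erase_insert haA]
    ring

end Marginal

theorem Supermodular.sum_mul_marginal_le_of_antitone {n : ℕ} {g : Finset (Fin n) → ℝ}
    (hg : Supermodular g) (hg0 : g ∅ = 0) {σ : Equiv.Perm (Fin n)} {w : Fin n → ℝ}
    (hw : ∀ j, 0 ≤ w j) (hσ : ∀ i j, σ.symm i ≤ σ.symm j → w j ≤ w i) (π : Equiv.Perm (Fin n)) :
    ∑ j, w j * marginal g σ j ≤ ∑ j, w j * marginal g π j := by
  have hsuperlevel : ∀ t, InitialSegment σ {j | t < w j} := fun t i j hj hij => by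
    simp only [mem_filter, mem_univ, true_and] at hj ⊢
    exact hj.trans_le (hσ i j hij)
  rw [← sub_nonneg, ← sum_sub_distrib]
  simp_rw [← mul_sub]
  refine sum_mul_nonneg_of_sum_superlevel_nonneg univ w _ (fun j _ => hw j) fun t => ?_
  rw [sum_sub_distrib, sum_marginal_of_initialSegment hg0 (hsuperlevel t), sub_nonneg]
  exact hg.le_sum_marginal hg0 π _

section Eps

variable {n : ℕ} {f g : Finset (Fin n) → ℝ}

theorem eps_le_sum_singleton_mul_marginal (hf : Submodular f) (hf0 : f ∅ = 0)
    (hg : MonotoneSet g) (σ : Equiv.Perm (Fin n)) :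
    eps f g σ ≤ ∑ j, f {j} * marginal g σ j :=
  sum_le_sum fun j _ =>
    mul_le_mul_of_nonneg_right (hf.marginal_le_singleton hf0 σ j) (marginal_nonneg hg σ j)

theorem mul_sum_singleton_mul_marginal_le_eps (hf : Submodular f) (hg : MonotoneSet g) {c : ℝ}
    (hc : ∀ j, c * f {j} ≤ f univ - f (univ \ {j})) (σ : Equiv.Perm (Fin n)) :
    c * ∑ j, f {j} * marginal g σ j ≤ eps f g σ := by
  rw [mul_sum]
  refine sum_le_sum fun j _ => ?_
  rw [← mul_assoc]
  exact mul_le_mul_of_nonneg_right ((hc j).trans (hf.sub_sdiff_singleton_le_marginal σ j))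
    (marginal_nonneg hg σ j)

end Eps

/-- Lemma 5(i): ordering by non-increasing singleton cost approximately minimizes
`ε` up to the curvature factor. -/
theorem eps_greedy_curvature {n : ℕ} [NeZero n] (f g : Finset (Fin n) → ℝ)
    (hf : Submodular f) (hfmono : MonotoneSet f) (hf0 : f ∅ = 0)
    (hfpos : ∀ s : Fin n, 0 < f {s})
    (hg : Supermodular g) (hgmono : MonotoneSet g) (hg0 : g ∅ = 0)
    (κf : ℝ)
    (hκf : κf = 1 - Finset.univ.inf' Finset.univ_nonempty
      (fun s : Fin n => (f Finset.univ - f (Finset.univ \ {s})) / f {s}))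
    (π₁ : Equiv.Perm (Fin n))
    (hπ₁ : ∀ k l : Fin n, k ≤ l → f {π₁ l} ≤ f {π₁ k}) :
    ∀ π : Equiv.Perm (Fin n), (1 - κf) * eps f g π₁ ≤ eps f g π := by
  intro π
  have hcurv : 1 - κf = univ.inf' univ_nonempty
      (fun s : Fin n => (f univ - f (univ \ {s})) / f {s}) := by
    rw [hκf, sub_sub_cancel]
  have hκ0 : 0 ≤ 1 - κf := hcurv ▸ le_inf' _ _ fun s _ =>
    div_nonneg (sub_nonneg.2 (hfmono _ _ sdiff_subset)) (hfpos s).le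
  have hκ : ∀ j, (1 - κf) * f {j} ≤ f univ - f (univ \ {j}) := fun j =>
    (le_div_iff₀ (hfpos j)).1 (hcurv ▸ inf'_le _ (mem_univ j))
  have hgreedy : ∀ i j, π₁.symm i ≤ π₁.symm j → f {j} ≤ f {i} := fun i j hij => by
    simpa using hπ₁ _ _ hij
  calc (1 - κf) * eps f g π₁
      ≤ (1 - κf) * ∑ j, f {j} * marginal g π₁ j :=
        mul_le_mul_of_nonneg_left (eps_le_sum_singleton_mul_marginal hf hf0 hgmono π₁) hκ0
    _ ≤ (1 - κf) * ∑ j, f {j} * marginal g π j :=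
        mul_le_mul_of_nonneg_left
          (hg.sum_mul_marginal_le_of_antitone hg0 (fun j => (hfpos j).le) hgreedy π) hκ0
    _ ≤ eps f g π := mul_sum_singleton_mul_marginal_le_eps hf hgmono hκ π
end

section
/- A set I ⊊ S is an f-initial set (i.e., I ⊆ cl({s}) for every s ∉ I, where cl(A) is the maximal superset B of A with f(B)=f(A)) if and only if for every subset A ⊆ S containing at least one element of the complement of I, f(A ∪ I) = f(A). -/
open Finset

/-- The `f`-closure of `A`: the (unique) maximal superset `B` of `A`
with `f B = f A`, i.e. the union of all such sets. -/
noncomputable def fClosure {n : ℕ} (f : Finset (Fin n) → ℝ) (A : Finset (Fin n)) : Finset (Fin n) :=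
  (Finset.univ.powerset.filter (fun B => A ⊆ B ∧ f B = f A)).sup id

/-!
By submodularity, the supersets `B ⊇ A` with `f B = f A` are closed under union, so
`f (cl A) = f A` and hence `B ⊆ cl A ↔ f (A ∪ B) = f A`. Thus `I` is `f`-initial iff
`f ({s} ∪ I) = f {s}` for every `s ∉ I`, and by diminishing returns this absorption of `I`
passes from `{s}` to every `A ∋ s`.
-/

section fClosure

variable {n : ℕ} {f : Finset (Fin n) → ℝ} {A B C I : Finset (Fin n)}

theorem subset_fClosure_of_eq (hAB : A ⊆ B) (hf : f B = f A) : B ⊆ fClosure f A :=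
  Finset.le_sup (f := id) (by simp [hAB, hf])

theorem self_subset_fClosure : A ⊆ fClosure f A :=
  subset_fClosure_of_eq subset_rfl rfl

theorem Submodular.apply_union_eq_of_subset (hf : Submodular f) (hmono : MonotoneSet f)
    (hCA : C ⊆ A) (hC : f (C ∪ I) = f C) : f (A ∪ I) = f A := by
  have hsub := hf A (C ∪ I)
  have hunion : A ∪ (C ∪ I) = A ∪ I := by
    rw [← union_assoc, union_eq_left.mpr hCA]
  have hinter : f C ≤ f (A ∩ (C ∪ I)) :=
    hmono _ _ (subset_inter hCA subset_union_left)
  have hle : f A ≤ f (A ∪ I) := hmono _ _ subset_union_left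
  rw [hunion, hC] at hsub
  linarith

theorem Submodular.apply_fClosure (hf : Submodular f) (hmono : MonotoneSet f) :
    f (fClosure f A) = f A := by
  suffices h : f (fClosure f A ∪ A) = f A by
    rwa [union_eq_left.mpr self_subset_fClosure] at h
  refine Finset.sup_induction (p := fun B => f (B ∪ A) = f A) (by simp) ?_ ?_
  · intro B hB D hD
    have hsub := hf (B ∪ A) (D ∪ A)
    have hunion : (B ∪ A) ∪ (D ∪ A) = (B ⊔ D) ∪ A := by
      ext; simp only [mem_union, sup_eq_union]; tauto
    have hinter : f A ≤ f ((B ∪ A) ∩ (D ∪ A)) :=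
      hmono _ _ (subset_inter subset_union_right subset_union_right)
    have hge : f A ≤ f ((B ⊔ D) ∪ A) := hmono _ _ subset_union_right
    rw [hunion, hB, hD] at hsub
    linarith
  · intro B hB
    simp only [mem_filter] at hB
    simpa [union_eq_left.mpr hB.2.1] using hB.2.2

theorem Submodular.subset_fClosure_iff (hf : Submodular f) (hmono : MonotoneSet f) :
    B ⊆ fClosure f A ↔ f (A ∪ B) = f A := by
  refine ⟨fun hB => le_antisymm ?_ (hmono _ _ subset_union_left),
    fun h => subset_union_right.trans (subset_fClosure_of_eq subset_union_left h)⟩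
  calc f (A ∪ B) ≤ f (fClosure f A) := hmono _ _ (union_subset self_subset_fClosure hB)
    _ = f A := hf.apply_fClosure hmono

end fClosure

theorem fInitial_iff_general {n : ℕ} (f : Finset (Fin n) → ℝ)
    (hf : Submodular f) (hfmono : MonotoneSet f)
    (I : Finset (Fin n)) :
    (∀ s : Fin n, s ∉ I → I ⊆ fClosure f {s}) ↔
      (∀ A : Finset (Fin n), (∃ x ∈ A, x ∉ I) → f (A ∪ I) = f A) := by
  constructor
  · rintro h A ⟨x, hxA, hxI⟩
    have hx : f ({x} ∪ I) = f {x} := (hf.subset_fClosure_iff hfmono).mp (h x hxI)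
    exact hf.apply_union_eq_of_subset hfmono (singleton_subset_iff.mpr hxA) hx
  · intro h s hsI
    exact (hf.subset_fClosure_iff hfmono).mpr (h {s} ⟨s, mem_singleton_self s, hsI⟩)

/-- Characterization of `f`-initial sets. -/
theorem fInitial_iff {n : ℕ} (f : Finset (Fin n) → ℝ)
    (hf : Submodular f) (hfmono : MonotoneSet f) (hf0 : f ∅ = 0)
    (I : Finset (Fin n)) (hI : I ⊂ Finset.univ) :
    (∀ s : Fin n, s ∉ I → I ⊆ fClosure f {s}) ↔
      (∀ A : Finset (Fin n), (∃ x ∈ A, x ∉ I) → f (A ∪ I) = f A) :=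
  fInitial_iff_general f hf hfmono I
end

section
/- If I is an f-initial set, then there exists an optimal search of S (minimizing c(π) = ∑_j (g(S_j^π) − g(S_j^π − j)) f(S_j^π)) that has I as an initial segment. -/
open Finset

/-! Exchange argument. Among the optimal searches take one minimising the sum of the positions
of the elements of `I`. If `I` is not an initial segment of it, some `a ∉ I` is searched
immediately before some `b ∈ I`; let `P` be the elements searched before `a`. Swapping `a` and
`b` changes only the two terms of the cost at these positions, and because `I` is `f`-initial,
`f (P ∪ {a}) = f (P ∪ {a, b})`, so by monotonicity of `f` and `g` those two terms do not grow.
The swapped search is therefore still optimal and has a smaller position sum. -/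

open Equiv

theorem Finset.sum_le_sum_of_pair_le {ι M : Type*} [Fintype ι] [AddCommMonoid M] [PartialOrder M]
    [IsOrderedAddMonoid M] {u v : ι → M} {k k' : ι} (hkk' : k ≠ k')
    (hpair : u k + u k' ≤ v k + v k') (hrest : ∀ p, p ≠ k → p ≠ k' → u p = v p) :
    ∑ p, u p ≤ ∑ p, v p := by
  classical
  rw [← sum_sdiff (subset_univ {k, k'}), ← sum_sdiff (subset_univ {k, k'}), sum_pair hkk',
    sum_pair hkk', sum_congr rfl fun p hp => hrest p (by simp_all) (by simp_all)]
  exact add_le_add_right hpair _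

section SearchCost

variable {n : ℕ}

def prefixAt (σ : Perm (Fin n)) (p : Fin n) : Finset (Fin n) :=
  univ.filter fun i => σ.symm i ≤ p

def strictPrefixAt (σ : Perm (Fin n)) (p : Fin n) : Finset (Fin n) :=
  univ.filter fun i => σ.symm i < p

def stepCost (f g : Finset (Fin n) → ℝ) (B : Finset (Fin n)) (x : Fin n) : ℝ :=
  (g B - g (B \ {x})) * f B

theorem searchCost_eq_sum_prefixAt (f g : Finset (Fin n) → ℝ) (σ : Perm (Fin n)) :
    searchCost f g σ = ∑ p, stepCost f g (prefixAt σ p) (σ p) := by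
  rw [searchCost, ← Equiv.sum_comp σ]
  simp [searchSegment, prefixAt, stepCost]

theorem prefixAt_eq_insert (σ : Perm (Fin n)) (p : Fin n) :
    prefixAt σ p = insert (σ p) (strictPrefixAt σ p) := by
  ext i
  simp only [prefixAt, strictPrefixAt, mem_filter, mem_univ, true_and, mem_insert,
    ← σ.symm_apply_eq, le_iff_eq_or_lt]

theorem apply_notMem_strictPrefixAt (σ : Perm (Fin n)) (p : Fin n) :
    σ p ∉ strictPrefixAt σ p := by
  simp [strictPrefixAt]

theorem stepCost_insert_pair_le {f g : Finset (Fin n) → ℝ} (hfmono : MonotoneSet f)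
    (hgmono : MonotoneSet g) {I : Finset (Fin n)}
    (hInit : ∀ A : Finset (Fin n), (∃ x ∈ A, x ∉ I) → f (A ∪ I) = f A)
    {P : Finset (Fin n)} {a b : Fin n} (ha : a ∉ I) (hb : b ∈ I) (haP : a ∉ P) (hbP : b ∉ P) :
    stepCost f g (insert b P) b + stepCost f g (insert b (insert a P)) a ≤
      stepCost f g (insert a P) a + stepCost f g (insert b (insert a P)) b := by
  have hab : a ≠ b := fun h => ha (h ▸ hb)
  have hfab : f (insert b (insert a P)) = f (insert a P) := by
    rw [← hInit _ ⟨a, by simp, ha⟩, ← hInit _ ⟨a, mem_insert_self a P, ha⟩, insert_union,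
      insert_eq_of_mem (mem_union_right _ hb)]
  have hfb : f (insert b P) ≤ f (insert a P) :=
    hfab ▸ hfmono _ _ (insert_subset_insert b (subset_insert a P))
  have hgb : g P ≤ g (insert b P) := hgmono _ _ (subset_insert b P)
  simp only [stepCost, sdiff_singleton_eq_erase, erase_insert haP, erase_insert hbP,
    erase_insert_of_ne hab.symm, erase_insert (show b ∉ insert a P by simp [hab.symm, hbP]), hfab]
  linear_combination mul_le_mul_of_nonneg_left hfb (sub_nonneg.2 hgb)

def positionSum (I : Finset (Fin n)) (σ : Perm (Fin n)) : ℕ :=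
  ∑ j ∈ I, (σ.symm j : ℕ)

theorem exists_adjacent_of_not_initialSegmentOf {σ : Perm (Fin n)} {I : Finset (Fin n)}
    (h : ¬ InitialSegmentOf σ I) : ∃ k k' : Fin n, (k' : ℕ) = k + 1 ∧ σ k ∉ I ∧ σ k' ∈ I := by
  simp only [InitialSegmentOf, not_forall] at h
  obtain ⟨i, j, hj, hij, hi⟩ := h
  obtain ⟨m, hm, hm'⟩ := Nat.exists_not_and_succ_of_not_zero_of_exists
    (p := fun m => ∃ h : (σ.symm i : ℕ) + m < n, σ ⟨_, h⟩ ∈ I)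
    (by simpa using hi) ⟨σ.symm j - σ.symm i, by
      have hq : (σ.symm i : ℕ) + (σ.symm j - σ.symm i) = σ.symm j := by
        rw [Fin.le_def] at hij; omega
      have hlt : (σ.symm i : ℕ) + (σ.symm j - σ.symm i) < n := by omega
      refine ⟨hlt, ?_⟩
      rwa [show (⟨_, hlt⟩ : Fin n) = σ.symm j from Fin.ext hq, apply_symm_apply]⟩
  obtain ⟨hlt, hmem⟩ := hm'
  exact ⟨⟨(σ.symm i : ℕ) + m, by omega⟩, ⟨_, hlt⟩, rfl, fun h => hm ⟨_, h⟩, hmem⟩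

section AdjacentSwap

variable {k k' : Fin n}

theorem Fin.swap_le_iff_of_ne (hk : (k' : ℕ) = k + 1) {p q : Fin n} (hq : q ≠ k) :
    swap k k' p ≤ q ↔ p ≤ q := by
  rw [swap_apply_def]
  split_ifs with h₁ h₂ <;> simp only [Fin.le_def, Fin.ext_iff] at * <;> omega

theorem Fin.swap_lt_left_iff (hk : (k' : ℕ) = k + 1) {p : Fin n} : swap k k' p < k ↔ p < k := by
  rw [swap_apply_def]
  split_ifs with h₁ h₂ <;> simp only [Fin.lt_def, Fin.ext_iff] at * <;> omega

theorem prefixAt_swap_trans_of_ne (hk : (k' : ℕ) = k + 1) (π : Perm (Fin n)) {p : Fin n}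
    (hp : p ≠ k) :
    prefixAt ((swap k k').trans π) p = prefixAt π p := by
  ext i
  simp only [prefixAt, mem_filter, mem_univ, true_and, symm_trans_apply, symm_swap,
    Fin.swap_le_iff_of_ne hk hp]

theorem strictPrefixAt_swap_trans_left (hk : (k' : ℕ) = k + 1) (π : Perm (Fin n)) :
    strictPrefixAt ((swap k k').trans π) k = strictPrefixAt π k := by
  ext i
  simp only [strictPrefixAt, mem_filter, mem_univ, true_and, symm_trans_apply, symm_swap,
    Fin.swap_lt_left_iff hk]

theorem strictPrefixAt_right (hk : (k' : ℕ) = k + 1) (σ : Perm (Fin n)) :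
    strictPrefixAt σ k' = prefixAt σ k := by
  ext i
  simp only [strictPrefixAt, prefixAt, mem_filter, mem_univ, true_and, Fin.lt_def, Fin.le_def]
  omega

theorem searchCost_swap_trans_le (hk : (k' : ℕ) = k + 1) {f g : Finset (Fin n) → ℝ}
    (hfmono : MonotoneSet f) (hgmono : MonotoneSet g) {I : Finset (Fin n)}
    (hInit : ∀ A : Finset (Fin n), (∃ x ∈ A, x ∉ I) → f (A ∪ I) = f A)
    {π : Perm (Fin n)} (ha : π k ∉ I) (hb : π k' ∈ I) :
    searchCost f g ((swap k k').trans π) ≤ searchCost f g π := by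
  have hkk' : k ≠ k' := by rintro rfl; omega
  have hbP : π k' ∉ strictPrefixAt π k := by
    simp [strictPrefixAt, Fin.le_iff_val_le_val, hk]
  rw [searchCost_eq_sum_prefixAt, searchCost_eq_sum_prefixAt]
  refine sum_le_sum_of_pair_le hkk' ?_ fun p hpk hpk' => ?_
  · rw [prefixAt_eq_insert _ k, strictPrefixAt_swap_trans_left hk,
      prefixAt_swap_trans_of_ne hk π hkk'.symm, prefixAt_eq_insert π k',
      strictPrefixAt_right hk, prefixAt_eq_insert π k]
    simpa using stepCost_insert_pair_le hfmono hgmono hInit ha hb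
      (apply_notMem_strictPrefixAt π k) hbP
  · rw [prefixAt_swap_trans_of_ne hk π hpk, trans_apply, swap_apply_of_ne_of_ne hpk hpk']

theorem positionSum_swap_trans_lt (hk : (k' : ℕ) = k + 1) {I : Finset (Fin n)} {π : Perm (Fin n)}
    (ha : π k ∉ I) (hb : π k' ∈ I) : positionSum I ((swap k k').trans π) < positionSum I π := by
  refine sum_lt_sum (fun j hj => ?_) ⟨π k', hb, by simp [hk]⟩
  have hjk : π.symm j ≠ k := by rintro rfl; simp_all
  rw [symm_trans_apply, symm_swap, swap_apply_def]
  split_ifs <;> simp_all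

end AdjacentSwap

end SearchCost

theorem fInitial_optimal_initial_segment_general {n : ℕ} (f g : Finset (Fin n) → ℝ)
    (hfmono : MonotoneSet f) (hgmono : MonotoneSet g)
    (I : Finset (Fin n))
    (hInit : ∀ A : Finset (Fin n), (∃ x ∈ A, x ∉ I) → f (A ∪ I) = f A) :
    ∃ π : Equiv.Perm (Fin n),
      (∀ τ : Equiv.Perm (Fin n), searchCost f g π ≤ searchCost f g τ) ∧
      InitialSegmentOf π I := by
  classical
  obtain ⟨π₀, -, hπ₀⟩ := exists_min_image univ (searchCost f g) univ_nonempty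
  obtain ⟨π, hπ, hmin⟩ := exists_min_image
    (univ.filter fun σ => searchCost f g σ = searchCost f g π₀) (positionSum I) ⟨π₀, by simp⟩
  rw [mem_filter] at hπ
  have hopt : ∀ τ, searchCost f g π ≤ searchCost f g τ := fun τ => hπ.2 ▸ hπ₀ τ (mem_univ τ)
  refine ⟨π, hopt, by_contra fun hI => ?_⟩
  obtain ⟨k, k', hk, ha, hb⟩ := exists_adjacent_of_not_initialSegmentOf hI
  have hcost := searchCost_swap_trans_le hk hfmono hgmono hInit ha hb
  have hpos := hmin _
    (mem_filter.2 ⟨mem_univ _, (hcost.trans_eq hπ.2).antisymm (hπ₀ _ (mem_univ _))⟩)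
  exact (positionSum_swap_trans_lt hk ha hb).not_ge hpos

/-- Lemma 6 (first case): an `f`-initial set is an initial segment of some
optimal search. -/
theorem fInitial_optimal_initial_segment {n : ℕ} (f g : Finset (Fin n) → ℝ)
    (hf : Submodular f) (hfmono : MonotoneSet f) (hf0 : f ∅ = 0)
    (hfpos : ∀ A : Finset (Fin n), A.Nonempty → 0 < f A)
    (hg : Supermodular g) (hgmono : MonotoneSet g) (hg0 : g ∅ = 0)
    (hgnonneg : ∀ A : Finset (Fin n), 0 ≤ g A)
    (I : Finset (Fin n)) (hI : I ⊂ Finset.univ)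
    (hInit : ∀ A : Finset (Fin n), (∃ x ∈ A, x ∉ I) → f (A ∪ I) = f A) :
    ∃ π : Equiv.Perm (Fin n),
      (∀ τ : Equiv.Perm (Fin n), searchCost f g π ≤ searchCost f g τ) ∧
      InitialSegmentOf π I :=
  fInitial_optimal_initial_segment_general f g hfmono hgmono I hInit
end

section
/- Suppose B ⊆ S is a separator of both f and g, i.e., f(A) = f(A∩B) + f(A∩B̄) and g(A) = g(A∩B) + g(A∩B̄) for all A. If A is a set of maximum density, then A∩B (if nonempty) has maximum density and A∩B̄ (if nonempty) has maximum density. Hence the lattice of maximum-density sets is the direct sum of its restrictions to B and to B̄. -/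
open Finset

def MaxDensity {n : ℕ} (f g : Finset (Fin n) → ℝ) (A : Finset (Fin n)) : Prop :=
  A.Nonempty ∧ ∀ C : Finset (Fin n), C.Nonempty → g C / f C ≤ g A / f A

/-!
Each of `A ∩ B`, `A ∩ Bᶜ` has density at most the maximum `ρ`, i.e. `g ≤ ρ f` on it. Since `B`
separates `f` and `g`, the sum of these two inequalities is the equality `g A = ρ f A`, so both
are equalities.
-/

section Separator

variable {n : ℕ} {f g : Finset (Fin n) → ℝ} {A B C : Finset (Fin n)}

def IsSeparator (h : Finset (Fin n) → ℝ) (B : Finset (Fin n)) : Prop :=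
  ∀ A, h A = h (A ∩ B) + h (A ∩ Bᶜ)

theorem IsSeparator.compl (hB : IsSeparator f B) : IsSeparator f Bᶜ := fun A => by
  rw [compl_compl, add_comm]
  exact hB A

theorem IsSeparator.apply_empty (hB : IsSeparator f B) : f ∅ = 0 := by
  simpa using hB ∅

theorem MaxDensity.apply_le_mul (hfpos : ∀ C : Finset (Fin n), C.Nonempty → 0 < f C)
    (hf0 : f ∅ = 0) (hg0 : g ∅ = 0) (hA : MaxDensity f g A) (C : Finset (Fin n)) :
    g C ≤ g A / f A * f C := by
  rcases C.eq_empty_or_nonempty with rfl | hC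
  · simp [hf0, hg0]
  · exact (div_le_iff₀ (hfpos C hC)).1 (hA.2 C hC)

theorem MaxDensity.of_div_eq (hA : MaxDensity f g A) (hC : C.Nonempty)
    (h : g C / f C = g A / f A) : MaxDensity f g C :=
  ⟨hC, fun D hD => h ▸ hA.2 D hD⟩

theorem MaxDensity.inter (hfpos : ∀ C : Finset (Fin n), C.Nonempty → 0 < f C)
    (hfB : IsSeparator f B) (hgB : IsSeparator g B) (hA : MaxDensity f g A)
    (hAB : (A ∩ B).Nonempty) : MaxDensity f g (A ∩ B) := by
  set ρ := g A / f A
  have hle (C : Finset (Fin n)) : g C ≤ ρ * f C :=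
    hA.apply_le_mul hfpos hfB.apply_empty hgB.apply_empty C
  have hgA : g A = ρ * f A := (div_mul_cancel₀ _ (hfpos A hA.1).ne').symm
  have hgAB : g (A ∩ B) = ρ * f (A ∩ B) := by
    rw [hfB A, hgB A] at hgA
    linarith [hle (A ∩ B), hle (A ∩ Bᶜ)]
  refine hA.of_div_eq hAB ?_
  rw [hgAB, mul_div_cancel_right₀ _ (hfpos _ hAB).ne']

end Separator

theorem separator_maxDensity_general {n : ℕ} (f g : Finset (Fin n) → ℝ)
    (hfpos : ∀ A : Finset (Fin n), A.Nonempty → 0 < f A)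
    (B : Finset (Fin n))
    (hfsep : ∀ A : Finset (Fin n), f A = f (A ∩ B) + f (A ∩ Bᶜ))
    (hgsep : ∀ A : Finset (Fin n), g A = g (A ∩ B) + g (A ∩ Bᶜ))
    (A : Finset (Fin n)) (hA : MaxDensity f g A) :
    ((A ∩ B).Nonempty → MaxDensity f g (A ∩ B)) ∧
      ((A ∩ Bᶜ).Nonempty → MaxDensity f g (A ∩ Bᶜ)) :=
  ⟨hA.inter hfpos hfsep hgsep,
    hA.inter hfpos (IsSeparator.compl hfsep) (IsSeparator.compl hgsep)⟩

/-- Lemma 7: if `B` separates both `f` and `g`, then intersecting a maximum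
density set with `B` or its complement preserves maximum density. -/
theorem separator_maxDensity {n : ℕ} (f g : Finset (Fin n) → ℝ)
    (hf : Submodular f) (hfmono : MonotoneSet f) (hf0 : f ∅ = 0)
    (hfpos : ∀ A : Finset (Fin n), A.Nonempty → 0 < f A)
    (hg : Supermodular g) (hgmono : MonotoneSet g) (hg0 : g ∅ = 0)
    (hgnonneg : ∀ A : Finset (Fin n), 0 ≤ g A)
    (B : Finset (Fin n)) (hB : B.Nonempty) (hBne : B ≠ Finset.univ)
    (hfsep : ∀ A : Finset (Fin n), f A = f (A ∩ B) + f (A ∩ Bᶜ))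
    (hgsep : ∀ A : Finset (Fin n), g A = g (A ∩ B) + g (A ∩ Bᶜ))
    (A : Finset (Fin n)) (hA : MaxDensity f g A) :
    ((A ∩ B).Nonempty → MaxDensity f g (A ∩ B)) ∧
      ((A ∩ Bᶜ).Nonempty → MaxDensity f g (A ∩ Bᶜ)) :=
  separator_maxDensity_general f g hfpos B hfsep hgsep A hA
end

section
/- A proper nonempty subset B ⊆ S is a separator of a submodular function f with f(∅)=0 (meaning f(A) = f(A∩B) + f(A∩B̄) for all A ⊆ S) if and only if f(S) = f(B) + f(B̄). -/
open Finset

namespace Submodular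

variable {n : ℕ} {f : Finset (Fin n) → ℝ}

theorem le_add_of_disjoint (hf : Submodular f) (hf0 : f ∅ = 0) {A C : Finset (Fin n)}
    (hAC : Disjoint A C) : f (A ∪ C) ≤ f A + f C := by
  simpa [disjoint_iff_inter_eq_empty.mp hAC, hf0] using hf A C

theorem le_inter_add_inter_compl (hf : Submodular f) (hf0 : f ∅ = 0) (A B : Finset (Fin n)) :
    f A ≤ f (A ∩ B) + f (A ∩ Bᶜ) := by
  have hsplit : A ∩ B ∪ A ∩ Bᶜ = A := by ext; simp only [mem_union, mem_inter, mem_compl]; tauto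
  have hdisj : Disjoint (A ∩ B) (A ∩ Bᶜ) :=
    disjoint_compl_right.mono inter_subset_right inter_subset_right
  simpa only [hsplit] using hf.le_add_of_disjoint hf0 hdisj

theorem univ_add_inter_add_inter_compl_le (hf : Submodular f) (A B : Finset (Fin n)) :
    f univ + f (A ∩ B) + f (A ∩ Bᶜ) ≤ f B + f Bᶜ + f A := by
  have hunion : B ∪ (A ∪ Bᶜ) = univ := by ext; simp only [mem_union, mem_compl, mem_univ]; tauto
  have hinter : B ∩ (A ∪ Bᶜ) = A ∩ B := by ext; simp only [mem_union, mem_inter, mem_compl]; tauto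
  have h₁ := hf B (A ∪ Bᶜ)
  have h₂ := hf A Bᶜ
  rw [hunion, hinter] at h₁
  linarith

end Submodular

theorem separator_iff_general {n : ℕ} (f : Finset (Fin n) → ℝ)
    (hf : Submodular f) (hf0 : f ∅ = 0)
    (B : Finset (Fin n)) :
    (∀ A : Finset (Fin n), f A = f (A ∩ B) + f (A ∩ Bᶜ)) ↔
      f Finset.univ = f B + f Bᶜ := by
  refine ⟨fun h => by simpa using h univ, fun h A => ?_⟩
  have hle := hf.le_inter_add_inter_compl hf0 A B
  have hge := hf.univ_add_inter_add_inter_compl_le A B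
  linarith

/-- A proper nonempty subset `B` is a separator of a submodular `f` iff
`f(S) = f(B) + f(S \ B)`. -/
theorem separator_iff {n : ℕ} (f : Finset (Fin n) → ℝ)
    (hf : Submodular f) (hf0 : f ∅ = 0)
    (B : Finset (Fin n)) (hB : B.Nonempty) (hBne : B ≠ Finset.univ) :
    (∀ A : Finset (Fin n), f A = f (A ∩ B) + f (A ∩ Bᶜ)) ↔
      f Finset.univ = f B + f Bᶜ :=
  separator_iff_general f hf hf0 B
end
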